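/- Let Ω ⊆ ℝ^N be an open set, let a₁, …, a_n ∈ closure(Ω) be pairwise distinct (n ≥ 2), and for each i ∈ {1, …, n} let φ_i : Ω \ {a₁, …, a_n} → ℝ be twice continuously differentiable with φ_i(x) > 0 and Δφ_i(x) = 0 for all x ∈ Ω \ {a₁, …, a_n}. Then for every u ∈ C_c^1(Ω \ {a₁, …, a_n}): ∫_Ω |∇u|² dx − (1/n²) ∑_{1≤i<j≤n} ∫_Ω |∇φ_i/φ_i − ∇φ_j/φ_j|² u² dx = ∫_Ω |∇( u ∏_{i=1}^n φ_i^{−1/n} )|² ∏_{i=1}^n φ_i^{2/n} dx. -/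

import Mathlib

/-!
Write `Fᵢ = ∇φᵢ / φᵢ` and `P = ∏ φᵢ ^ (-1/n)`. Then `∇(u P) = P (∇u - (u/n) ∑ Fᵢ)` and
`P² ∏ φᵢ ^ (2/n) = 1`, so the right-hand integrand is `|∇u - (u/n) ∑ Fᵢ|²`. Harmonicity of `φᵢ`
gives `div (u² Fᵢ) = 2u ∇u·Fᵢ - u² |Fᵢ|²`, and this divergence integrates to zero because `u` has
compact support in `Ω ∖ {a₁, …, aₙ}`. Expanding the square, the cross terms `2u ∇u·Fᵢ` become
`u² |Fᵢ|²`, and the Lagrange identity `∑_{i<j} |Fᵢ - Fⱼ|² = n ∑ |Fᵢ|² - |∑ Fᵢ|²` collects what is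
left into the pair sum.
-/

open MeasureTheory

noncomputable def lap {N : ℕ} (φ : EuclideanSpace ℝ (Fin N) → ℝ)
    (x : EuclideanSpace ℝ (Fin N)) : ℝ :=
  ∑ i : Fin N, fderiv ℝ (fun y => fderiv ℝ φ y (EuclideanSpace.single i 1)) x
    (EuclideanSpace.single i 1)

open InnerProductSpace Finset

theorem ContDiffOn.contDiff_of_tsupport_subset {𝕜 E F : Type*} [NontriviallyNormedField 𝕜]
    [NormedAddCommGroup E] [NormedSpace 𝕜 E] [NormedAddCommGroup F] [NormedSpace 𝕜 F]
    {f : E → F} {U : Set E} {k : WithTop ℕ∞} (hf : ContDiffOn 𝕜 k f U) (hU : IsOpen U)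
    (hfU : tsupport f ⊆ U) : ContDiff 𝕜 k f :=
  contDiff_iff_contDiffAt.2 fun x => by
    by_cases hx : x ∈ tsupport f
    · exact hf.contDiffAt (hU.mem_nhds (hfU hx))
    · exact contDiffAt_const.congr_of_eventuallyEq (notMem_tsupport_iff_eventuallyEq.1 hx)

theorem ContinuousOn.integrable_of_forall_notMem_eq_zero {X : Type*} [TopologicalSpace X]
    [T2Space X] [MeasurableSpace X] [OpensMeasurableSpace X] {μ : Measure X}
    [IsFiniteMeasureOnCompacts μ] {f : X → ℝ} {U K : Set X} (hf : ContinuousOn f U)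
    (hU : IsOpen U) (hK : IsCompact K) (hKU : K ⊆ U) (hfK : ∀ x ∉ K, f x = 0) :
    Integrable f μ := by
  have hfK' : tsupport f ⊆ K :=
    closure_minimal (fun x hx => by_contra fun h => hx (hfK x h)) hK.isClosed
  exact (hf.continuous_of_tsupport_subset hU (hfK'.trans hKU)).integrable_of_hasCompactSupport
    (HasCompactSupport.intro hK hfK)

section IntegrationByParts

variable {E : Type*} [NormedAddCommGroup E] [NormedSpace ℝ E] [MeasurableSpace E] [BorelSpace E]
  {μ : Measure E} {h : E → ℝ}

theorem ContDiff.integrable_fderiv_apply [IsFiniteMeasureOnCompacts μ] (hh : ContDiff ℝ 1 h)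
    (hcs : HasCompactSupport h) (v : E) : Integrable (fun x => fderiv ℝ h x v) μ :=
  ((hh.continuous_fderiv one_ne_zero).clm_apply continuous_const).integrable_of_hasCompactSupport
    (hcs.fderiv_apply ℝ v)

theorem ContDiff.setIntegral_fderiv_apply_eq_zero [FiniteDimensional ℝ E] [μ.IsAddHaarMeasure]
    (hh : ContDiff ℝ 1 h) (hcs : HasCompactSupport h) {s : Set E} (hs : tsupport h ⊆ s) (v : E) :
    ∫ x in s, fderiv ℝ h x v ∂μ = 0 := by
  rw [setIntegral_eq_integral_of_forall_compl_eq_zero fun x hx => by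
    rw [fderiv_of_notMem_tsupport ℝ fun h => hx (hs h), zero_apply]]
  simpa using integral_mul_fderiv_eq_neg_fderiv_mul_of_integrable (μ := μ) (v := v)
    (f := fun _ => (1 : ℝ)) (by simp) (by simpa using hh.integrable_fderiv_apply hcs v)
    (by simpa using hh.continuous.integrable_of_hasCompactSupport hcs)
    (fun x _ => differentiableAt_const _) (fun x _ => hh.differentiable one_ne_zero x)

end IntegrationByParts

theorem two_mul_sum_filter_fst_lt_snd {ι : Type*} [Fintype ι] [LinearOrder ι] (f : ι → ι → ℝ)
    (hsymm : ∀ i j, f i j = f j i) (hdiag : ∀ i, f i i = 0) :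
    2 * ∑ p ∈ univ.filter (fun p : ι × ι => p.1 < p.2), f p.1 p.2 = ∑ i, ∑ j, f i j := by
  have hsplit : ∀ p : ι × ι,
      f p.1 p.2 = (if p.1 < p.2 then f p.1 p.2 else 0) + (if p.2 < p.1 then f p.1 p.2 else 0) := by
    rintro ⟨i, j⟩
    rcases lt_trichotomy i j with h | rfl | h
    · simp [h, h.not_gt]
    · simp [hdiag]
    · simp [h, h.not_gt]
  have hswap : ∑ p : ι × ι, (if p.2 < p.1 then f p.1 p.2 else 0)
      = ∑ p : ι × ι, (if p.1 < p.2 then f p.1 p.2 else 0) :=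
    Fintype.sum_equiv (Equiv.prodComm ι ι) _ _ fun p => by rw [hsymm]; rfl
  rw [← Fintype.sum_prod_type', Fintype.sum_congr _ _ hsplit, sum_add_distrib, hswap, sum_filter]
  ring

theorem sum_filter_fst_lt_snd_norm_sub_sq {ι X : Type*} [Fintype ι] [LinearOrder ι]
    [NormedAddCommGroup X] [InnerProductSpace ℝ X] (v : ι → X) :
    ∑ p ∈ univ.filter (fun p : ι × ι => p.1 < p.2), ‖v p.1 - v p.2‖ ^ 2
      = Fintype.card ι * ∑ i, ‖v i‖ ^ 2 - ‖∑ i, v i‖ ^ 2 := by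
  have hfull : ∑ i, ∑ j, ‖v i - v j‖ ^ 2
      = 2 * (Fintype.card ι * ∑ i, ‖v i‖ ^ 2 - ‖∑ i, v i‖ ^ 2) := by
    simp only [norm_sub_sq_real, sum_add_distrib, sum_sub_distrib, sum_const, card_univ,
      nsmul_eq_mul, ← mul_sum, ← inner_sum, ← sum_inner, real_inner_self_eq_norm_sq]
    ring
  have h := two_mul_sum_filter_fst_lt_snd (fun i j => ‖v i - v j‖ ^ 2)
    (fun i j => by rw [norm_sub_rev]) (fun i => by simp)
  linarith

theorem gradient_of_notMem_tsupport {F : Type*} [NormedAddCommGroup F] [InnerProductSpace ℝ F]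
    [CompleteSpace F] {f : F → ℝ} {x : F} (hx : x ∉ tsupport f) : gradient f x = 0 := by
  simp [gradient, fderiv_of_notMem_tsupport ℝ hx]

theorem HasFDerivAt.finset_prod_rpow_const {ι E : Type*} [Fintype ι] [NormedAddCommGroup E]
    [NormedSpace ℝ E] {f : ι → E → ℝ} {f' : ι → E →L[ℝ] ℝ} {x : E}
    (hf : ∀ i, HasFDerivAt (f i) (f' i) x) (hpos : ∀ i, 0 < f i x) (c : ℝ) :
    HasFDerivAt (fun y => ∏ i, f i y ^ c) ((∏ i, f i x ^ c) • c • ∑ i, (f i x)⁻¹ • f' i) x := by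
  classical
  refine (HasFDerivAt.finsetProd (u := univ) fun i _ =>
    (hf i).rpow_const (p := c) (Or.inl (hpos i).ne')).congr_fderiv ?_
  rw [smul_sum, smul_sum]
  refine sum_congr rfl fun i _ => ?_
  rw [← prod_erase_mul _ _ (mem_univ i), Real.rpow_sub_one (hpos i).ne']
  simp only [smul_smul]
  congr 1
  ring

theorem hasGradientAt_mul_prod_rpow_const {ι F : Type*} [Fintype ι] [NormedAddCommGroup F]
    [InnerProductSpace ℝ F] [CompleteSpace F] {u : F → ℝ} {φ : ι → F → ℝ} {x : F}
    (hu : DifferentiableAt ℝ u x) (hφ : ∀ i, DifferentiableAt ℝ (φ i) x)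
    (hpos : ∀ i, 0 < φ i x) (c : ℝ) :
    HasGradientAt (fun y => u y * ∏ i, φ i y ^ c)
      ((∏ i, φ i x ^ c) • (gradient u x + (c * u x) • ∑ i, (φ i x)⁻¹ • gradient (φ i) x)) x := by
  rw [hasGradientAt_iff_hasFDerivAt]
  refine (hu.hasFDerivAt.mul
    (HasFDerivAt.finset_prod_rpow_const (fun i => (hφ i).hasFDerivAt) hpos c)).congr_fderiv ?_
  simp only [map_smul, map_add, map_sum, toDual_gradient]
  module

theorem norm_sub_smul_sum_sq {ι X : Type*} [Fintype ι] [LinearOrder ι] [NormedAddCommGroup X]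
    [InnerProductSpace ℝ X] (g : X) (t : ℝ) (F : ι → X) :
    ‖g - (1 / (Fintype.card ι : ℝ) * t) • ∑ i, F i‖ ^ 2
      = ‖g‖ ^ 2 - 1 / (Fintype.card ι : ℝ) ^ 2 *
          ∑ p ∈ univ.filter (fun p : ι × ι => p.1 < p.2), ‖F p.1 - F p.2‖ ^ 2 * t ^ 2
        - 1 / (Fintype.card ι : ℝ) * ∑ i, (2 * t * inner ℝ g (F i) - t ^ 2 * ‖F i‖ ^ 2) := by
  set n : ℝ := (Fintype.card ι : ℝ)
  -- true also for `n = 0`, so `ι` may be empty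
  have hn : 1 / n ^ 2 * n = 1 / n := by
    rw [sq, one_div, one_div, ← div_self_mul_self' n]
    ring
  rw [← sum_mul, sum_filter_fst_lt_snd_norm_sub_sq, norm_sub_sq_real, norm_smul, inner_smul_right,
    inner_sum, sum_sub_distrib, ← mul_sum, ← mul_sum, Real.norm_eq_abs, mul_pow, sq_abs]
  linear_combination (t ^ 2 * ∑ i, ‖F i‖ ^ 2) * hn

section Euclidean

variable {N : ℕ}

local notation "E" => EuclideanSpace ℝ (Fin N)

local notation "𝐞" k => EuclideanSpace.single k (1 : ℝ)

noncomputable def divergence (V : Fin N → E → ℝ) (x : E) : ℝ :=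
  ∑ k, fderiv ℝ (V k) x (𝐞 k)

theorem integrable_divergence {μ : Measure E} [IsFiniteMeasureOnCompacts μ] {V : Fin N → E → ℝ}
    (hV : ∀ k, ContDiff ℝ 1 (V k)) (hcs : ∀ k, HasCompactSupport (V k)) :
    Integrable (divergence V) μ :=
  integrable_finsetSum _ fun k _ => (hV k).integrable_fderiv_apply (hcs k) _

theorem setIntegral_divergence_eq_zero {μ : Measure E} [μ.IsAddHaarMeasure] {V : Fin N → E → ℝ}
    (hV : ∀ k, ContDiff ℝ 1 (V k)) (hcs : ∀ k, HasCompactSupport (V k)) {s : Set E}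
    (hs : ∀ k, tsupport (V k) ⊆ s) : ∫ x in s, divergence V x ∂μ = 0 := by
  unfold divergence
  rw [integral_finsetSum _ fun k _ => (hV k).integrable_fderiv_apply (hcs k) _]
  exact sum_eq_zero fun k _ => (hV k).setIntegral_fderiv_apply_eq_zero (hcs k) (hs k) _

theorem gradient_apply_eq_fderiv_single (f : E → ℝ) (x : E) (k : Fin N) :
    gradient f x k = fderiv ℝ f x (𝐞 k) := by
  simpa [inner_gradient_left] using
    (EuclideanSpace.inner_single_right k (1 : ℝ) (gradient f x)).symm

theorem fderiv_apply_gradient_eq_sum (w φ : E → ℝ) (x : E) :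
    fderiv ℝ w x (gradient φ x) = ∑ k, fderiv ℝ φ x (𝐞 k) * fderiv ℝ w x (𝐞 k) := by
  rw [← inner_gradient_left, PiLp.inner_apply]
  simp [gradient_apply_eq_fderiv_single]

theorem divergence_mul_fderiv_single {w φ : E → ℝ} {x : E} (hw : DifferentiableAt ℝ w x)
    (hφ : DifferentiableAt ℝ (fderiv ℝ φ) x) :
    divergence (fun k y => w y * fderiv ℝ φ y (𝐞 k)) x
      = fderiv ℝ w x (gradient φ x) + w x * lap φ x := by
  have hprod : ∀ k : Fin N, fderiv ℝ (fun y => w y * fderiv ℝ φ y (𝐞 k)) x (𝐞 k)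
      = w x * fderiv ℝ (fun y => fderiv ℝ φ y (𝐞 k)) x (𝐞 k)
        + fderiv ℝ φ x (𝐞 k) * fderiv ℝ w x (𝐞 k) := fun k => by
    rw [fderiv_fun_mul hw (hφ.clm_apply (differentiableAt_const _))]
    simp
  rw [divergence, sum_congr rfl fun k _ => hprod k, sum_add_distrib,
    fderiv_apply_gradient_eq_sum, lap, mul_sum]
  ring

theorem divergence_sq_mul_inv_mul_fderiv_single {u φ : E → ℝ} {x : E}
    (hu : DifferentiableAt ℝ u x) (hφ : DifferentiableAt ℝ φ x)
    (hφ' : DifferentiableAt ℝ (fderiv ℝ φ) x) (hφx : φ x ≠ 0) :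
    divergence (fun k y => u y ^ 2 * (φ y)⁻¹ * fderiv ℝ φ y (𝐞 k)) x
      = 2 * u x * inner ℝ (gradient u x) ((φ x)⁻¹ • gradient φ x)
        - u x ^ 2 * ‖(φ x)⁻¹ • gradient φ x‖ ^ 2 + u x ^ 2 * (φ x)⁻¹ * lap φ x := by
  have hw : HasFDerivAt (fun y => u y ^ 2 * (φ y)⁻¹)
      (u x ^ 2 • (-(φ x ^ 2)⁻¹) • fderiv ℝ φ x + (φ x)⁻¹ • (2 * u x) • fderiv ℝ u x) x := by
    simpa using (hu.hasFDerivAt.pow 2).fun_mul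
      ((hasDerivAt_inv hφx).comp_hasFDerivAt x hφ.hasFDerivAt)
  rw [divergence_mul_fderiv_single hw.differentiableAt hφ', hw.fderiv]
  simp only [add_apply, smul_apply, smul_eq_mul, ← inner_gradient_left,
    real_inner_self_eq_norm_sq, real_inner_smul_right, norm_smul, Real.norm_eq_abs, mul_pow,
    sq_abs]
  field_simp
  ring

theorem tsupport_sq_mul_inv_mul_fderiv_single_subset (u φ : E → ℝ) (k : Fin N) :
    tsupport (fun y => u y ^ 2 * (φ y)⁻¹ * fderiv ℝ φ y (𝐞 k)) ⊆ tsupport u :=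
  (tsupport_mul_subset_left.trans tsupport_mul_subset_left).trans
    (tsupport_comp_subset (g := fun t : ℝ => t ^ 2) (by norm_num) u)

theorem contDiff_sq_mul_inv_mul_fderiv_single {U : Set E} (hU : IsOpen U) {u φ : E → ℝ}
    (hu : ContDiff ℝ 1 u) (huU : tsupport u ⊆ U) (hφ : ContDiffOn ℝ 2 φ U)
    (hφ0 : ∀ x ∈ U, φ x ≠ 0) (k : Fin N) :
    ContDiff ℝ 1 (fun y => u y ^ 2 * (φ y)⁻¹ * fderiv ℝ φ y (𝐞 k)) :=
  (((hu.contDiffOn.pow 2).mul ((hφ.of_le one_le_two).inv hφ0)).mul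
    ((hφ.fderiv_of_isOpen hU (by norm_num)).clm_apply contDiffOn_const)).contDiff_of_tsupport_subset
    hU ((tsupport_sq_mul_inv_mul_fderiv_single_subset u φ k).trans huU)

theorem prod_rpow_neg_inv_sq_mul_prod_rpow {ι : Type*} [Fintype ι] {f : ι → ℝ}
    (hf : ∀ i, 0 < f i) (n : ℝ) :
    (∏ i, f i ^ (-(1 / n))) ^ 2 * ∏ i, f i ^ (2 / n) = 1 := by
  rw [← prod_pow, ← prod_mul_distrib]
  refine prod_eq_one fun i _ => ?_
  rw [← Real.rpow_natCast, ← Real.rpow_mul (hf i).le, ← Real.rpow_add (hf i)]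
  convert Real.rpow_zero (f i) using 2
  push_cast
  ring

theorem norm_gradient_mul_prod_rpow_sq_mul_prod_rpow {ι : Type*} [Fintype ι] [LinearOrder ι]
    {u : E → ℝ} {φ : ι → E → ℝ} {x : E} (hu : DifferentiableAt ℝ u x)
    (hφ : ∀ i, DifferentiableAt ℝ (φ i) x) (hφ' : ∀ i, DifferentiableAt ℝ (fderiv ℝ (φ i)) x)
    (hpos : ∀ i, 0 < φ i x) (harm : ∀ i, lap (φ i) x = 0) :
    ‖gradient (fun y => u y * ∏ i, φ i y ^ (-(1 / (Fintype.card ι : ℝ)))) x‖ ^ 2 *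
        ∏ i, φ i x ^ ((2 : ℝ) / (Fintype.card ι : ℝ))
      = ‖gradient u x‖ ^ 2 - 1 / (Fintype.card ι : ℝ) ^ 2 *
          ∑ p ∈ univ.filter (fun p : ι × ι => p.1 < p.2),
            ‖(φ p.1 x)⁻¹ • gradient (φ p.1) x - (φ p.2 x)⁻¹ • gradient (φ p.2) x‖ ^ 2 * u x ^ 2
        - 1 / (Fintype.card ι : ℝ) *
          ∑ i, divergence (fun k y => u y ^ 2 * (φ i y)⁻¹ * fderiv ℝ (φ i) y (𝐞 k)) x := by
  rw [(hasGradientAt_mul_prod_rpow_const hu hφ hpos _).gradient, norm_smul, mul_pow,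
    Real.norm_eq_abs, sq_abs, mul_right_comm, prod_rpow_neg_inv_sq_mul_prod_rpow hpos, one_mul,
    neg_mul, neg_smul, ← sub_eq_add_neg, norm_sub_smul_sum_sq]
  congr 2
  refine sum_congr rfl fun i _ => ?_
  rw [divergence_sq_mul_inv_mul_fderiv_single hu (hφ i) (hφ' i) (hpos i).ne', harm i]
  ring

theorem norm_gradient_mul_prod_rpow_sq_mul_prod_rpow_of_tsupport_subset {ι : Type*} [Fintype ι]
    [LinearOrder ι] {U : Set E} (hU : IsOpen U) {φ : ι → E → ℝ}
    (hφ : ∀ i, ContDiffOn ℝ 2 (φ i) U) (hpos : ∀ i, ∀ x ∈ U, 0 < φ i x)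
    (harm : ∀ i, ∀ x ∈ U, lap (φ i) x = 0) {u : E → ℝ} (hu : ContDiff ℝ 1 u)
    (huU : tsupport u ⊆ U) (x : E) :
    ‖gradient (fun y => u y * ∏ i, φ i y ^ (-(1 / (Fintype.card ι : ℝ)))) x‖ ^ 2 *
        ∏ i, φ i x ^ ((2 : ℝ) / (Fintype.card ι : ℝ))
      = ‖gradient u x‖ ^ 2 - 1 / (Fintype.card ι : ℝ) ^ 2 *
          ∑ p ∈ univ.filter (fun p : ι × ι => p.1 < p.2),
            ‖(φ p.1 x)⁻¹ • gradient (φ p.1) x - (φ p.2 x)⁻¹ • gradient (φ p.2) x‖ ^ 2 * u x ^ 2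
        - 1 / (Fintype.card ι : ℝ) *
          ∑ i, divergence (fun k y => u y ^ 2 * (φ i y)⁻¹ * fderiv ℝ (φ i) y (𝐞 k)) x := by
  by_cases hx : x ∈ tsupport u
  · have hxU : U ∈ nhds x := hU.mem_nhds (huU hx)
    exact norm_gradient_mul_prod_rpow_sq_mul_prod_rpow (hu.differentiable one_ne_zero x)
      (fun i => ((hφ i).differentiableOn two_ne_zero).differentiableAt hxU)
      (fun i => (((hφ i).fderiv_of_isOpen hU (by norm_num)).differentiableOn
        one_ne_zero).differentiableAt hxU)
      (fun i => hpos i x (huU hx)) (fun i => harm i x (huU hx))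
  · have hdiv : ∀ i, divergence (fun k y => u y ^ 2 * (φ i y)⁻¹ * fderiv ℝ (φ i) y (𝐞 k)) x = 0 :=
      fun i => sum_eq_zero fun k _ => by
        rw [fderiv_of_notMem_tsupport ℝ fun h =>
          hx (tsupport_sq_mul_inv_mul_fderiv_single_subset u (φ i) k h), zero_apply]
    simp [hdiv, gradient_of_notMem_tsupport hx, image_eq_zero_of_notMem_tsupport hx,
      gradient_of_notMem_tsupport fun h => hx (tsupport_mul_subset_left h)]

theorem setIntegral_norm_gradient_sq_sub_sum_pairs_eq {ι : Type*} [Fintype ι] [LinearOrder ι]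
    {U s : Set E} (hU : IsOpen U) {φ : ι → E → ℝ} (hφ : ∀ i, ContDiffOn ℝ 2 (φ i) U)
    (hpos : ∀ i, ∀ x ∈ U, 0 < φ i x) (harm : ∀ i, ∀ x ∈ U, lap (φ i) x = 0) {u : E → ℝ}
    (hu : ContDiff ℝ 1 u) (hcs : HasCompactSupport u) (huU : tsupport u ⊆ U)
    (hus : tsupport u ⊆ s) :
    (∫ x in s, ‖gradient u x‖ ^ 2) - 1 / (Fintype.card ι : ℝ) ^ 2 *
        ∑ p ∈ univ.filter (fun p : ι × ι => p.1 < p.2), ∫ x in s,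
          ‖(φ p.1 x)⁻¹ • gradient (φ p.1) x - (φ p.2 x)⁻¹ • gradient (φ p.2) x‖ ^ 2 * u x ^ 2
      = ∫ x in s, ‖gradient (fun y => u y * ∏ i, φ i y ^ (-(1 / (Fintype.card ι : ℝ)))) x‖ ^ 2 *
          ∏ i, φ i x ^ ((2 : ℝ) / (Fintype.card ι : ℝ)) := by
  have hflux := fun i => contDiff_sq_mul_inv_mul_fderiv_single hU hu huU (hφ i)
    fun x hx => (hpos i x hx).ne'
  have hflux_supp := fun i k => tsupport_sq_mul_inv_mul_fderiv_single_subset u (φ i) k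
  have hflux_cs := fun i k => hcs.of_isClosed_subset (isClosed_tsupport _) (hflux_supp i k)
  have hlogGrad : ∀ i, ContinuousOn (fun x => (φ i x)⁻¹ • gradient (φ i) x) U := fun i =>
    ((hφ i).continuousOn.inv₀ fun x hx => (hpos i x hx).ne').smul
      ((toDual ℝ E).symm.continuous.comp_continuousOn
        ((hφ i).continuousOn_fderiv_of_isOpen hU (by norm_num)))
  have hA : Integrable (fun x => ‖gradient u x‖ ^ 2) (volume.restrict s) :=
    (((toDual ℝ E).symm.continuous.comp (hu.continuous_fderiv one_ne_zero)).norm.pow 2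
      |>.continuousOn.integrable_of_forall_notMem_eq_zero isOpen_univ hcs (Set.subset_univ _)
        fun x hx => by simp [fderiv_of_notMem_tsupport ℝ hx]).integrableOn
  have hB : ∀ p : ι × ι, Integrable (fun x =>
      ‖(φ p.1 x)⁻¹ • gradient (φ p.1) x - (φ p.2 x)⁻¹ • gradient (φ p.2) x‖ ^ 2 * u x ^ 2)
      (volume.restrict s) := fun p =>
    ((((hlogGrad p.1).sub (hlogGrad p.2)).norm.pow 2).mul (hu.continuous.continuousOn.pow 2)
      |>.integrable_of_forall_notMem_eq_zero hU hcs huU fun x hx => by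
        simp [image_eq_zero_of_notMem_tsupport hx]).integrableOn
  have hB' := (integrable_finsetSum (univ.filter (fun p : ι × ι => p.1 < p.2))
    fun p _ => hB p).const_mul (1 / (Fintype.card ι : ℝ) ^ 2)
  have hC := fun i => (integrable_divergence (μ := volume.restrict s) (hflux i) (hflux_cs i))
  simp only [norm_gradient_mul_prod_rpow_sq_mul_prod_rpow_of_tsupport_subset hU hφ hpos harm hu huU]
  rw [integral_sub (hA.sub' hB') ((integrable_finsetSum _ fun i _ => hC i).const_mul _),
    integral_sub hA hB', integral_const_mul, integral_const_mul,
    integral_finsetSum _ fun p _ => hB p, integral_finsetSum _ fun i _ => hC i]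
  simp [setIntegral_divergence_eq_zero (hflux _) (hflux_cs _) fun k => (hflux_supp _ k).trans hus]

end Euclidean

theorem stmt9_general (N n : ℕ)
    (Ω : Set (EuclideanSpace ℝ (Fin N))) (hΩo : IsOpen Ω)
    (a : Fin n → EuclideanSpace ℝ (Fin N))
    (φ : Fin n → EuclideanSpace ℝ (Fin N) → ℝ)
    (hφ : ∀ i, ContDiffOn ℝ 2 (φ i) (Ω \ Set.range a))
    (hφpos : ∀ i, ∀ x ∈ Ω \ Set.range a, 0 < φ i x)
    (hφharm : ∀ i, ∀ x ∈ Ω \ Set.range a, lap (φ i) x = 0)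
    (u : EuclideanSpace ℝ (Fin N) → ℝ) (hu : ContDiff ℝ 1 u)
    (hcs : HasCompactSupport u) (hsupp : tsupport u ⊆ Ω \ Set.range a) :
    (∫ x in Ω, ‖gradient u x‖ ^ 2) -
        (1 / (n : ℝ) ^ 2) *
          ∑ p ∈ Finset.univ.filter (fun p : Fin n × Fin n => p.1 < p.2),
            ∫ x in Ω,
              ‖(φ p.1 x)⁻¹ • gradient (φ p.1) x - (φ p.2 x)⁻¹ • gradient (φ p.2) x‖ ^ 2 *
                u x ^ 2
      = ∫ x in Ω,
          ‖gradient (fun y => u y * ∏ i, φ i y ^ (-(1 / (n : ℝ)))) x‖ ^ 2 *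
            ∏ i, φ i x ^ ((2 : ℝ) / (n : ℝ)) := by
  simpa only [Fintype.card_fin] using setIntegral_norm_gradient_sq_sub_sum_pairs_eq
    (hΩo.sdiff (Set.finite_range a).isClosed) hφ hφpos hφharm hu hcs hsupp
    (hsupp.trans Set.sdiff_subset)

theorem stmt9 (N n : ℕ) (hn : 2 ≤ n)
    (Ω : Set (EuclideanSpace ℝ (Fin N))) (hΩo : IsOpen Ω)
    (a : Fin n → EuclideanSpace ℝ (Fin N)) (ha : ∀ i, a i ∈ closure Ω)
    (hinj : Function.Injective a)
    (φ : Fin n → EuclideanSpace ℝ (Fin N) → ℝ)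
    (hφ : ∀ i, ContDiffOn ℝ 2 (φ i) (Ω \ Set.range a))
    (hφpos : ∀ i, ∀ x ∈ Ω \ Set.range a, 0 < φ i x)
    (hφharm : ∀ i, ∀ x ∈ Ω \ Set.range a, lap (φ i) x = 0)
    (u : EuclideanSpace ℝ (Fin N) → ℝ) (hu : ContDiff ℝ 1 u)
    (hcs : HasCompactSupport u) (hsupp : tsupport u ⊆ Ω \ Set.range a) :
    (∫ x in Ω, ‖gradient u x‖ ^ 2) -
        (1 / (n : ℝ) ^ 2) *
          ∑ p ∈ Finset.univ.filter (fun p : Fin n × Fin n => p.1 < p.2),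
            ∫ x in Ω,
              ‖(φ p.1 x)⁻¹ • gradient (φ p.1) x - (φ p.2 x)⁻¹ • gradient (φ p.2) x‖ ^ 2 *
                u x ^ 2
      = ∫ x in Ω,
          ‖gradient (fun y => u y * ∏ i, φ i y ^ (-(1 / (n : ℝ)))) x‖ ^ 2 *
            ∏ i, φ i x ^ ((2 : ℝ) / (n : ℝ)) :=
  stmt9_general N n Ω hΩo a φ hφ hφpos hφharm u hu hcs hsupp
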